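/- Let S and U be nonempty finite sets, let ρ be a real with 0 ≤ ρ < 1, let c : S × U → ℝ, and let P : S × U × S → ℝ satisfy P(θ,u,η) ≥ 0 and Σ_{η∈S} P(θ,u,η) ≤ ρ for all θ ∈ S and u ∈ U. Define (T h)(θ) = min_{u∈U} [ c(θ,u) + Σ_{η∈S} P(θ,u,η) h(η) ]. Then T has a unique fixed point h* : S → ℝ, and for every initial function h₀ : S → ℝ the iterates h_{l+1} = T h_l converge to h*: for all l ≥ 0 and all θ ∈ S, |h_l(θ) − h*(θ)| ≤ ρ^l · max_{η∈S} |h₀(η) − h*(η)|, and hence h_l(θ) → h*(θ) as l → ∞. -/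

import Mathlib

/-!
Read with the sup distance on `S → ℝ`, the Bellman operator is `ρ`-Lipschitz: a pointwise
minimum over controls is `1`-Lipschitz in the family being minimised, and each control moves
its cost by at most `(∑ η, P θ u η) · dist g h ≤ ρ · dist g h`. Since `ρ < 1`, Banach's fixed
point theorem gives the unique fixed point and the convergence of every value-iteration
sequence, and iterating the Lipschitz bound gives the geometric rate.
-/

open Finset Filter
open scoped NNReal

theorem Finset.abs_inf'_sub_inf'_le {ι α : Type*} [AddCommGroup α] [LinearOrder α]
    [IsOrderedAddMonoid α] {s : Finset ι} (H : s.Nonempty) {f g : ι → α} {C : α}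
    (hfg : ∀ i ∈ s, |f i - g i| ≤ C) : |s.inf' H f - s.inf' H g| ≤ C := by
  have one_side : ∀ {f g : ι → α}, (∀ i ∈ s, |f i - g i| ≤ C) →
      s.inf' H f - s.inf' H g ≤ C := by
    intro f g hfg
    refine sub_le_comm.1 (Finset.le_inf' H _ fun i hi => ?_)
    calc s.inf' H f - C ≤ f i - C := sub_le_sub_right (Finset.inf'_le f hi) C
      _ ≤ g i := sub_le_comm.1 (abs_sub_le_iff.1 (hfg i hi)).1
  exact abs_sub_le_iff.2
    ⟨one_side hfg, one_side fun i hi => abs_sub_comm (g i) (f i) ▸ hfg i hi⟩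

theorem Pi.dist_eq_sup'_abs {S : Type*} [Fintype S] [Nonempty S] (g h : S → ℝ) :
    dist g h = univ.sup' univ_nonempty fun η => |g η - h η| := by
  refine le_antisymm (dist_pi_le_iff'.2 fun η => ?_) (sup'_le _ _ fun η _ => ?_)
  · exact le_sup' (fun η => |g η - h η|) (mem_univ η)
  · exact dist_le_pi_dist g h η

theorem abs_sum_mul_sub_sum_mul_le {S : Type*} [Fintype S] {p g h : S → ℝ}
    (hp : ∀ η, 0 ≤ p η) :
    |∑ η, p η * g η - ∑ η, p η * h η| ≤ (∑ η, p η) * dist g h := by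
  rw [← sum_sub_distrib, sum_mul]
  refine (abs_sum_le_sum_abs _ _).trans (sum_le_sum fun η _ => ?_)
  rw [← mul_sub, abs_mul, abs_of_nonneg (hp η), ← Real.dist_eq]
  exact mul_le_mul_of_nonneg_left (dist_le_pi_dist g h η) (hp η)

theorem LipschitzWith.dist_iterate_le_of_isFixedPt {α : Type*} [PseudoMetricSpace α]
    {K : ℝ≥0} {f : α → α} (hf : LipschitzWith K f) {x : α} (hx : Function.IsFixedPt f x)
    (y : α) (n : ℕ) : dist (f^[n] y) x ≤ K ^ n * dist y x := by
  simpa [(hx.iterate n).eq] using (hf.iterate n).dist_le_mul y x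

section Bellman

variable {S U : Type*} [Fintype S] [Fintype U] [Nonempty U]

noncomputable def bellman (c : S → U → ℝ) (P : S → U → S → ℝ) (h : S → ℝ) (θ : S) : ℝ :=
  univ.inf' univ_nonempty fun u => c θ u + ∑ η, P θ u η * h η

theorem lipschitzWith_bellman {ρ : ℝ≥0} (c : S → U → ℝ) {P : S → U → S → ℝ}
    (hP0 : ∀ θ u η, 0 ≤ P θ u η) (hPρ : ∀ θ u, ∑ η, P θ u η ≤ ρ) :
    LipschitzWith ρ (bellman c P) := by
  refine LipschitzWith.of_dist_le_mul fun g h => (dist_pi_le_iff (by positivity)).2 fun θ => ?_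
  rw [Real.dist_eq]
  refine abs_inf'_sub_inf'_le _ fun u _ => ?_
  rw [add_sub_add_left_eq_sub]
  exact (abs_sum_mul_sub_sum_mul_le (hP0 θ u)).trans
    (mul_le_mul_of_nonneg_right (hPρ θ u) dist_nonneg)

end Bellman

theorem value_iteration_converges
    {S U : Type*} [Fintype S] [Nonempty S] [Fintype U] [Nonempty U]
    (ρ : ℝ) (hρ0 : 0 ≤ ρ) (hρ1 : ρ < 1)
    (c : S → U → ℝ) (P : S → U → S → ℝ)
    (hP0 : ∀ θ u η, 0 ≤ P θ u η)
    (hPρ : ∀ θ u, ∑ η, P θ u η ≤ ρ)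
    (T : (S → ℝ) → S → ℝ)
    (hT : ∀ (h : S → ℝ) (θ : S),
      T h θ = Finset.univ.inf' Finset.univ_nonempty
        (fun u => c θ u + ∑ η, P θ u η * h η)) :
    ∃ hstar : S → ℝ, T hstar = hstar ∧
      (∀ h : S → ℝ, T h = h → h = hstar) ∧
      (∀ (h₀ : S → ℝ) (l : ℕ) (θ : S),
        |T^[l] h₀ θ - hstar θ| ≤
          ρ ^ l * Finset.univ.sup' Finset.univ_nonempty
            (fun η => |h₀ η - hstar η|)) ∧
      (∀ (h₀ : S → ℝ) (θ : S),
        Tendsto (fun l => T^[l] h₀ θ) atTop (nhds (hstar θ))) := by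
  lift ρ to ℝ≥0 using hρ0
  obtain rfl : T = bellman c P := funext₂ hT
  have hlip := lipschitzWith_bellman c hP0 hPρ
  have hcontr : ContractingWith ρ (bellman c P) := ⟨mod_cast hρ1, hlip⟩
  have hfix := hcontr.fixedPoint_isFixedPt
  refine ⟨_, hfix, fun h hh => hcontr.fixedPoint_unique hh, fun h₀ l θ => ?_,
    fun h₀ => tendsto_pi_nhds.1 (hcontr.tendsto_iterate_fixedPoint h₀)⟩
  rw [← Pi.dist_eq_sup'_abs, ← Real.dist_eq]
  exact (dist_le_pi_dist _ _ θ).trans (hlip.dist_iterate_le_of_isFixedPt hfix h₀ l)
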